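/- Let Q ∈ S^d_{>0} satisfy λ(Q) = 1. If Q is perfect and eutactic, i.e., Q^{-1} = Σ_{x ∈ Min Q} α_x xxᵀ with all α_x > 0 and {xxᵀ : x ∈ Min Q} spans S^d, then Q is a strict local minimum of det on the Ryshkov polyhedron R = {Q' ∈ S^d_{>0} : λ(Q') ≥ 1}: there is a neighborhood U of Q such that every Q' ∈ R ∩ U with Q' ≠ Q satisfies det Q' > det Q. -/

import Mathlib

open Matrix

/-- The quadratic form value `xᵀ Q x`. -/
noncomputable def qf {d : ℕ} (Q : Matrix (Fin d) (Fin d) ℝ) (x : Fin d → ℝ) : ℝ :=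
  x ⬝ᵥ Q.mulVec x

/-- Coordinatewise cast of an integer vector to a real vector. -/
noncomputable def intCast {d : ℕ} (x : Fin d → ℤ) : Fin d → ℝ := fun i => (x i : ℝ)

/-- The arithmetical minimum `λ(Q) = inf_{x ∈ ℤ^d \ {0}} xᵀQx`. -/
noncomputable def arithMin {d : ℕ} (Q : Matrix (Fin d) (Fin d) ℝ) : ℝ :=
  sInf {r : ℝ | ∃ x : Fin d → ℤ, x ≠ 0 ∧ r = qf Q (intCast x)}

/-- The set of minimal vectors `Min Q`. -/
def minVecs {d : ℕ} (Q : Matrix (Fin d) (Fin d) ℝ) : Set (Fin d → ℤ) :=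
  {x | x ≠ 0 ∧ qf Q (intCast x) = arithMin Q}

/-! Let `C` be the cone of symmetric `N` with `xᵀNx ≥ 0` for every `x ∈ Min Q`; every `Q'` of the
Ryshkov polyhedron satisfies `Q' - Q ∈ C`. The derivative of `det` at `Q` is
`N ↦ det Q · tr(N Q⁻¹)`, and by eutaxy `tr(N Q⁻¹) = Σ αₓ xᵀNx`, which is positive on `C \ {0}`
because, by perfection, a symmetric `N` vanishing on all of `Min Q` is orthogonal to itself.
Compactness of `C ∩ sphere` upgrades this to a bound `c‖N‖` on `C`, which beats the `o(‖N‖)`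
remainder of `det` near `Q`. -/

section Cone

variable {E : Type*} [NormedAddCommGroup E] [NormedSpace ℝ E] [ProperSpace E]

theorem exists_pos_mul_norm_le_of_pos_on_cone {C : Set E} (hC : IsClosed C)
    (hsmul : ∀ t : ℝ, 0 < t → ∀ v ∈ C, t • v ∈ C) (f : E →L[ℝ] ℝ)
    (hf : ∀ v ∈ C, v ≠ 0 → 0 < f v) : ∃ c > 0, ∀ v ∈ C, c * ‖v‖ ≤ f v := by
  have hcompact : IsCompact (C ∩ Metric.sphere 0 1) :=
    (isCompact_sphere 0 1).of_isClosed_subset (hC.inter Metric.isClosed_sphere)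
      Set.inter_subset_right
  obtain ⟨c, hc, hle⟩ := hcompact.exists_forall_le' f.continuous.continuousOn
    fun v hv => hf v hv.1 (ne_zero_of_mem_unit_sphere ⟨v, hv.2⟩)
  refine ⟨c, hc, fun v hv => ?_⟩
  rcases eq_or_ne v 0 with rfl | hv0
  · simp
  have hnorm : 0 < ‖v‖ := norm_pos_iff.mpr hv0
  have hunit : ‖v‖⁻¹ • v ∈ C ∩ Metric.sphere 0 1 :=
    ⟨hsmul _ (inv_pos.mpr hnorm) v hv, by simp [norm_smul, hnorm.ne']⟩
  have := hle _ hunit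
  rwa [map_smul, smul_eq_mul, le_inv_mul_iff₀ hnorm, mul_comm] at this

end Cone

theorem HasFDerivAt.eventually_lt_of_mul_norm_le {E : Type*} [NormedAddCommGroup E]
    [NormedSpace ℝ E] {g : E → ℝ} {L : E →L[ℝ] ℝ} {x : E} (hg : HasFDerivAt g L x)
    {C : Set E} {c : ℝ} (hc : 0 < c) (hL : ∀ v ∈ C, c * ‖v‖ ≤ L v) :
    ∀ᶠ y in nhds x, y - x ∈ C → y ≠ x → g x < g y := by
  filter_upwards [hg.isLittleO.def (half_pos hc)] with y hy hyC hne
  have hpos : 0 < ‖y - x‖ := norm_pos_iff.mpr (sub_ne_zero.mpr hne)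
  have := (abs_le.mp (Real.norm_eq_abs _ ▸ hy)).1
  nlinarith [hL _ hyC]

-- The sup norm: the norm of `n → n → ℝ` seen by `ContinuousMultilinearMap.hasFDerivAt`.
attribute [local instance] Matrix.normedAddCommGroup Matrix.normedSpace

section Det

variable {n : Type*} [Fintype n] [DecidableEq n]

variable (n) in
noncomputable def detRowContinuousMultilinear :
    ContinuousMultilinearMap ℝ (fun _ : n => n → ℝ) ℝ where
  toMultilinearMap := Matrix.detRowAlternating.toMultilinearMap
  cont := continuous_id.matrix_det

theorem hasFDerivAt_det (Q : Matrix n n ℝ) :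
    HasFDerivAt (fun A : Matrix n n ℝ => A.det)
      (LinearMap.toContinuousLinearMap
        (Matrix.traceLinearMap n ℝ ℝ ∘ₗ LinearMap.mulRight ℝ Q.adjugate)) Q := by
  refine ((detRowContinuousMultilinear n).hasFDerivAt Q).congr_fderiv
    (ContinuousLinearMap.ext fun N => ?_)
  erw [ContinuousMultilinearMap.linearDeriv_apply]
  change _ = Matrix.trace (Matrix.of N * Q.adjugate)
  have hrow : ∀ i, detRowContinuousMultilinear n (Function.update Q i (N i))
      = (Q.updateRow i (N i)).det := fun i => rfl
  simp_rw [hrow, ← Matrix.cramer_transpose_apply, Matrix.cramer_eq_adjugate_mulVec,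
    ← Matrix.adjugate_transpose]
  simp [Matrix.trace, Matrix.mulVec, Matrix.mul_apply, dotProduct, mul_comm]

end Det

section Form

variable {d : ℕ}

theorem qf_sub (A B : Matrix (Fin d) (Fin d) ℝ) (x : Fin d → ℝ) :
    qf (A - B) x = qf A x - qf B x := by
  simp [qf, sub_mulVec, dotProduct_sub]

theorem qf_smul (c : ℝ) (A : Matrix (Fin d) (Fin d) ℝ) (x : Fin d → ℝ) :
    qf (c • A) x = c * qf A x := by
  simp [qf, smul_mulVec, dotProduct_smul]

theorem continuous_qf (x : Fin d → ℝ) :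
    Continuous fun A : Matrix (Fin d) (Fin d) ℝ => qf A x :=
  continuous_const.dotProduct (continuous_id.matrix_mulVec continuous_const)

theorem trace_mul_vecMulVec_self (N : Matrix (Fin d) (Fin d) ℝ) (u : Fin d → ℝ) :
    trace (N * vecMulVec u u) = qf N u := by
  rw [mul_vecMulVec, trace_vecMulVec, dotProduct_comm, qf]

theorem trace_mul_sum_smul_vecMulVec_self {ι : Type*} (N : Matrix (Fin d) (Fin d) ℝ)
    (s : Finset ι) (α : ι → ℝ) (v : ι → Fin d → ℝ) :
    trace (N * ∑ i ∈ s, α i • vecMulVec (v i) (v i)) = ∑ i ∈ s, α i * qf N (v i) := by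
  simp only [Matrix.mul_sum, trace_sum, Matrix.mul_smul, trace_smul, smul_eq_mul,
    trace_mul_vecMulVec_self]

theorem eq_zero_of_mem_span_of_qf_eq_zero {ι : Type*} {v : ι → Fin d → ℝ} {S : Set ι}
    {N : Matrix (Fin d) (Fin d) ℝ} (hN : N.IsSymm)
    (hspan : N ∈ Submodule.span ℝ ((fun i => vecMulVec (v i) (v i)) '' S))
    (hzero : ∀ i ∈ S, qf N (v i) = 0) : N = 0 := by
  have horth : ∀ M ∈ Submodule.span ℝ ((fun i => vecMulVec (v i) (v i)) '' S),
      trace (N * M) = 0 := fun M hM => by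
    induction hM using Submodule.span_induction with
    | mem M hM =>
      obtain ⟨i, hi, rfl⟩ := hM
      rw [trace_mul_vecMulVec_self, hzero i hi]
    | zero => simp
    | add A B _ _ hA hB => rw [Matrix.mul_add, trace_add, hA, hB, add_zero]
    | smul c A _ hA => rw [Matrix.mul_smul, trace_smul, hA, smul_zero]
  have htrace := horth N hspan
  nth_rewrite 1 [← hN.eq] at htrace
  rwa [← conjTranspose_eq_transpose_of_trivial, trace_conjTranspose_mul_self_eq_zero_iff]
    at htrace

theorem arithMin_le_qf {Q : Matrix (Fin d) (Fin d) ℝ} (hQ : Q.PosSemidef) {x : Fin d → ℤ}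
    (hx : x ≠ 0) : arithMin Q ≤ qf Q (intCast x) :=
  csInf_le ⟨0, by rintro r ⟨y, -, rfl⟩; simpa [qf] using hQ.dotProduct_mulVec_nonneg (intCast y)⟩
    ⟨x, hx, rfl⟩

end Form

theorem Matrix.adjugate_eq_det_smul_inv {n K : Type*} [Fintype n] [DecidableEq n] [Field K]
    {A : Matrix n n K} (hA : A.det ≠ 0) : A.adjugate = A.det • A⁻¹ := by
  rw [inv_def, smul_smul, Ring.inverse_eq_inv, mul_inv_cancel₀ hA, one_smul]

section MinVecCone

variable {d : ℕ}

def minVecCone (Q : Matrix (Fin d) (Fin d) ℝ) : Set (Matrix (Fin d) (Fin d) ℝ) :=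
  {N | N.IsSymm ∧ ∀ x ∈ minVecs Q, 0 ≤ qf N (intCast x)}

theorem isClosed_minVecCone (Q : Matrix (Fin d) (Fin d) ℝ) : IsClosed (minVecCone Q) := by
  simp only [minVecCone, Set.ofPred_and, Set.ofPred_forall]
  exact (isClosed_eq continuous_id.matrix_transpose continuous_id).inter
    (isClosed_biInter fun x _ => isClosed_le continuous_const (continuous_qf _))

theorem smul_mem_minVecCone {Q N : Matrix (Fin d) (Fin d) ℝ} {t : ℝ} (ht : 0 ≤ t)
    (hN : N ∈ minVecCone Q) : t • N ∈ minVecCone Q :=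
  ⟨hN.1.smul t, fun x hx => by rw [qf_smul]; exact mul_nonneg ht (hN.2 x hx)⟩

theorem sub_mem_minVecCone_of_arithMin_le {Q Q' : Matrix (Fin d) (Fin d) ℝ} (hQ : Q.IsSymm)
    (hQ' : Q'.PosSemidef) (hle : arithMin Q ≤ arithMin Q') : Q' - Q ∈ minVecCone Q :=
  ⟨(isHermitian_iff_isSymm.mp hQ'.isHermitian).sub hQ, fun x hx => by
    rw [qf_sub, hx.2, sub_nonneg]
    exact hle.trans (arithMin_le_qf hQ' hx.1)⟩

theorem trace_mul_inv_pos_of_mem_minVecCone {Q : Matrix (Fin d) (Fin d) ℝ}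
    (hfin : (minVecs Q).Finite) {α : (Fin d → ℤ) → ℝ} (hα : ∀ x ∈ minVecs Q, 0 < α x)
    (heut : Q⁻¹ = ∑ x ∈ hfin.toFinset, α x • vecMulVec (intCast x) (intCast x))
    (hperf : ∀ A : Matrix (Fin d) (Fin d) ℝ, A.IsSymm →
      A ∈ Submodule.span ℝ
        ((fun x : Fin d → ℤ => vecMulVec (intCast x) (intCast x)) '' minVecs Q))
    {N : Matrix (Fin d) (Fin d) ℝ} (hN : N ∈ minVecCone Q) (hN0 : N ≠ 0) :
    0 < trace (N * Q⁻¹) := by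
  rw [heut, trace_mul_sum_smul_vecMulVec_self]
  have hterm : ∀ x ∈ hfin.toFinset, 0 ≤ α x * qf N (intCast x) := fun x hx =>
    mul_nonneg (hα x (hfin.mem_toFinset.mp hx)).le (hN.2 x (hfin.mem_toFinset.mp hx))
  refine (Finset.sum_nonneg hterm).lt_of_ne fun hsum => hN0 ?_
  refine eq_zero_of_mem_span_of_qf_eq_zero hN.1 (hperf N hN.1) fun x hx => ?_
  have := (Finset.sum_eq_zero_iff_of_nonneg hterm).mp hsum.symm x (hfin.mem_toFinset.mpr hx)
  exact (mul_eq_zero.mp this).resolve_left (hα x hx).ne'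

end MinVecCone

theorem stmt10_general (d : ℕ) (Q : Matrix (Fin d) (Fin d) ℝ) (hQ : Q.PosDef)
    (hlam : arithMin Q = 1) (hfin : (minVecs Q).Finite)
    (α : (Fin d → ℤ) → ℝ) (hα : ∀ x ∈ minVecs Q, 0 < α x)
    (heut : Q⁻¹ = ∑ x ∈ hfin.toFinset, α x • vecMulVec (intCast x) (intCast x))
    (hperf : ∀ A : Matrix (Fin d) (Fin d) ℝ, A.IsSymm →
      A ∈ Submodule.span ℝ
        ((fun x : Fin d → ℤ => vecMulVec (intCast x) (intCast x)) '' minVecs Q)) :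
    ∃ U ∈ nhds Q, ∀ Q' ∈ U, Matrix.PosDef Q' → 1 ≤ arithMin Q' → Q' ≠ Q →
      Q.det < Matrix.det Q' := by
  set L := LinearMap.toContinuousLinearMap
    (traceLinearMap (Fin d) ℝ ℝ ∘ₗ LinearMap.mulRight ℝ Q.adjugate)
  have hL : ∀ N, L N = Q.det * trace (N * Q⁻¹) := fun N => by
    change trace (N * Q.adjugate) = _
    rw [adjugate_eq_det_smul_inv hQ.det_pos.ne', Matrix.mul_smul, trace_smul, smul_eq_mul]
  obtain ⟨c, hc, hcL⟩ := exists_pos_mul_norm_le_of_pos_on_cone (isClosed_minVecCone Q)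
    (fun t ht N hN => smul_mem_minVecCone ht.le hN) L fun N hN hN0 =>
      (mul_pos hQ.det_pos (trace_mul_inv_pos_of_mem_minVecCone hfin hα heut hperf hN hN0)).trans_eq
        (hL N).symm
  refine ⟨_, (hasFDerivAt_det Q).eventually_lt_of_mul_norm_le hc hcL,
    fun Q' hQ' hQ'pd hQ'min hne => hQ' ?_ hne⟩
  exact sub_mem_minVecCone_of_arithMin_le (isHermitian_iff_isSymm.mp hQ.isHermitian)
    hQ'pd.posSemidef (hlam ▸ hQ'min)

/-- A perfect and eutactic form is a strict local minimum of the determinant on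
the Ryshkov polyhedron (one direction of Voronoi's theorem). -/
theorem stmt10 (d : ℕ) (hd : 0 < d) (Q : Matrix (Fin d) (Fin d) ℝ) (hQ : Q.PosDef)
    (hlam : arithMin Q = 1) (hfin : (minVecs Q).Finite)
    (α : (Fin d → ℤ) → ℝ) (hα : ∀ x ∈ minVecs Q, 0 < α x)
    (heut : Q⁻¹ = ∑ x ∈ hfin.toFinset, α x • vecMulVec (intCast x) (intCast x))
    (hperf : ∀ A : Matrix (Fin d) (Fin d) ℝ, A.IsSymm →
      A ∈ Submodule.span ℝ
        ((fun x : Fin d → ℤ => vecMulVec (intCast x) (intCast x)) '' minVecs Q)) :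
    ∃ U ∈ nhds Q, ∀ Q' ∈ U, Matrix.PosDef Q' → 1 ≤ arithMin Q' → Q' ≠ Q →
      Q.det < Matrix.det Q' :=
  stmt10_general d Q hQ hlam hfin α hα heut hperf
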